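/- arXiv:2011.13124 — 2 statements merged into one kernel-verified Lean document; each statement's English description precedes it below -/
import Mathlib

section
/- Let Γ, Γ̃ be groups with pairs of automorphisms (α₀,α₁) and (α̃₀,α̃₁), and let G = LΓ ⋊ V, G̃ = LΓ̃ ⋊ V be the corresponding twisted fraction groups. If there exist an isomorphism β : Γ → Γ̃, a permutation σ of {0,1}, and elements h₀, h₁ ∈ Γ̃ with α̃_{σ(i)} = ad(h_i) ∘ β α_i β^{-1} for i = 0,1, then G and G̃ are isomorphic. -/
/-! Basic setup: the Cantor space, prefix replacement, Thompson's group `V`,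
slopes, dyadic rationals, standard dyadic partitions, locally constant maps,
and the permutation model of the twisted fraction groups `LΓ ⋊ V`. -/

abbrev Cantor : Type := ℕ → Bool

/-- Concatenation of a finite word with an infinite sequence. -/
def cat (w : List Bool) (x : Cantor) : Cantor :=
  fun n => if n < w.length then w.getD n false else x (n - w.length)

/-- The standard dyadic interval (cylinder) associated to a finite word. -/
def cyl (w : List Bool) : Set Cantor := {x | ∃ y : Cantor, x = cat w y}

/-- Membership in Thompson's group `V`: a homeomorphism of the Cantor space which is
everywhere locally given by prefix replacement. -/
def memV (v : Cantor ≃ₜ Cantor) : Prop :=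
  ∀ x : Cantor, ∃ (m w : List Bool) (y : Cantor),
    x = cat m y ∧ ∀ z : Cantor, v (cat m z) = cat w z

/-- `HasLogSlope v x k` : `k = log₂ v'(x)`, base-2 logarithm of the slope of `v` at `x`. -/
def HasLogSlope (v : Cantor ≃ₜ Cantor) (x : Cantor) (k : ℤ) : Prop :=
  ∃ (m w : List Bool) (y : Cantor),
    x = cat m y ∧ (∀ z : Cantor, v (cat m z) = cat w z) ∧
      k = (m.length : ℤ) - (w.length : ℤ)

open Classical in
noncomputable def logSlope (v : Cantor ≃ₜ Cantor) (x : Cantor) : ℤ :=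
  if h : ∃ k : ℤ, HasLogSlope v x k then h.choose else 0

/-- The eventually periodic sequence `c∞ = c·c·c⋯`. -/
def tailSeq (c : List Bool) : Cantor := fun n => c.getD (n % c.length) false

/-- `x` lies in the tail equivalence class of the word `c`, i.e. `x = y·c∞`. -/
def InTailClass (x : Cantor) (c : List Bool) : Prop :=
  ∃ y : List Bool, x = cat y (tailSeq c)

/-- `x` is eventually periodic (a rational point of the Cantor space). -/
def EvPeriodic (x : Cantor) : Prop :=
  ∃ (y c : List Bool), c ≠ [] ∧ x = cat y (tailSeq c)

/-- A prime word: a nonempty word which is not a proper power of a word. -/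
def PrimeWord (c : List Bool) : Prop :=
  c ≠ [] ∧ ∀ (d : List Bool) (k : ℕ), 2 ≤ k → c ≠ (List.replicate k d).flatten

/-- `conjH φ v = φ ∘ v ∘ φ⁻¹`. -/
def conjH (φ v : Cantor ≃ₜ Cantor) : Cantor ≃ₜ Cantor := φ.symm.trans (v.trans φ)

/-- `φ` normalizes Thompson's group `V` inside `Homeo(𝔠)` : `φ V φ⁻¹ = V`. -/
def NormalizesV (φ : Cantor ≃ₜ Cantor) : Prop :=
  (conjH φ) '' {v | memV v} = {v | memV v}

/-- The copy of the dyadic rationals `Q₂ ⊂ 𝔠` : finitely supported sequences. -/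
def InQ2 (x : Cantor) : Prop := ∃ n : ℕ, ∀ m, n ≤ m → x m = false

def zeroSeq : Cantor := fun _ => false

/-- A standard dyadic partition of the Cantor space. -/
def IsSDP (P : Finset (List Bool)) : Prop :=
  ∀ x : Cantor, ∃! w : List Bool, w ∈ P ∧ x ∈ cyl w

/-- Locally constant map: constant on each piece of some standard dyadic partition. -/
def IsLC {Γ : Type*} (f : Cantor → Γ) : Prop :=
  ∃ P : Finset (List Bool), IsSDP P ∧ ∀ w ∈ P, ∀ y z : Cantor, f (cat w y) = f (cat w z)

/-- `h` agrees on `Q₂` with (the restriction of) a locally constant map. -/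
def AgreesOnQ2WithLC {Γ : Type*} (h : Cantor → Γ) : Prop :=
  ∃ b : Cantor → Γ, IsLC b ∧ ∀ x, InQ2 x → h x = b x

section GroupPart
variable {Γ : Type*} [Group Γ]

/-- `alphaWord α₀ α₁ (m₁⋯m_k) = α_{m_k} ∘ ⋯ ∘ α_{m₁}`. -/
def alphaWord (α₀ α₁ : Γ ≃* Γ) (m : List Bool) : Γ ≃* Γ :=
  m.foldl (fun acc b => acc.trans (if b then α₁ else α₀)) (MulEquiv.refl Γ)

open Classical in
/-- The twisting automorphism `τ_{v,x} = α_{v(I)}⁻¹ ∘ α_I` for a standard dyadic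
interval `I` containing `x` and adapted to `v`. -/
noncomputable def tauEquiv (α₀ α₁ : Γ ≃* Γ) (v : Cantor ≃ₜ Cantor) (x : Cantor) : Γ ≃* Γ :=
  if h : ∃ p : List Bool × List Bool, x ∈ cyl p.1 ∧ ∀ z : Cantor, v (cat p.1 z) = cat p.2 z
  then (alphaWord α₀ α₁ h.choose.1).trans (alphaWord α₀ α₁ h.choose.2).symm
  else MulEquiv.refl Γ

/-- The element `a·v` of the twisted `LΓ ⋊ V`, realized as the permutation
`(x,g) ↦ (v x, a(v x) · τ_{v,x}(g))` of `𝔠 × Γ`. -/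
noncomputable def permOf (α₀ α₁ : Γ ≃* Γ) (a : Cantor → Γ) (v : Cantor ≃ₜ Cantor) :
    Equiv.Perm (Cantor × Γ) where
  toFun p := (v p.1, a (v p.1) * tauEquiv α₀ α₁ v p.1 p.2)
  invFun p := (v.symm p.1, (tauEquiv α₀ α₁ v (v.symm p.1)).symm ((a p.1)⁻¹ * p.2))
  left_inv := by rintro ⟨x, g⟩; simp
  right_inv := by rintro ⟨x, g⟩; simp

end GroupPart

/-- The twisted fraction group `G = LΓ ⋊ V` of the triple `(Γ, α₀, α₁)`,
as a group of permutations of `𝔠 × Γ`. -/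
noncomputable def Gsub (Γ : Type*) [Group Γ] (α₀ α₁ : Γ ≃* Γ) :
    Subgroup (Equiv.Perm (Cantor × Γ)) :=
  Subgroup.closure {p | ∃ a v, IsLC a ∧ memV v ∧ p = permOf α₀ α₁ a v}

/-- The untwisted case `α₀ = α₁ = id`. -/
noncomputable def permOfU {Γ : Type*} [Group Γ] (a : Cantor → Γ) (v : Cantor ≃ₜ Cantor) :=
  permOf (MulEquiv.refl Γ) (MulEquiv.refl Γ) a v

/-- The untwisted fraction group `G = LΓ ⋊ V`. -/
noncomputable def GsubU (Γ : Type*) [Group Γ] := Gsub Γ (MulEquiv.refl Γ) (MulEquiv.refl Γ)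

/-- `f ∈ N_{K̄}(G)` : the element `f` of `K̄ = ∏_{Q₂}Γ` normalizes `G = LΓ ⋊ V`
(untwisted case), i.e. `f·a·(f^v)⁻¹` and `f⁻¹·a·f^v` are locally constant on `Q₂`. -/
def InNormKbar {Γ : Type*} [Group Γ] (f : Cantor → Γ) : Prop :=
  ∀ (a : Cantor → Γ) (v : Cantor ≃ₜ Cantor), IsLC a → memV v →
    AgreesOnQ2WithLC (fun x => f x * a x * (f (v.symm x))⁻¹) ∧
    AgreesOnQ2WithLC (fun x => (f x)⁻¹ * a x * f (v.symm x))

-- basic cat lemmas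
theorem cat_nil (x : Cantor) : cat [] x = x := by
  funext n; simp [cat]

theorem cat_append (m t : List Bool) (x : Cantor) :
    cat (m ++ t) x = cat m (cat t x) := by
  funext n
  simp only [cat, List.length_append]
  rcases lt_or_ge n m.length with h | h
  · rw [if_pos (lt_of_lt_of_le h (Nat.le_add_right _ _)), if_pos h,
      List.getD_eq_getElem _ _ (by simp; omega), List.getD_eq_getElem _ _ h,
      List.getElem_append_left h]
  · simp only [if_neg (not_lt.mpr h)]
    rcases lt_or_ge n (m.length + t.length) with h2 | h2
    · have h3 : n - m.length < t.length := by omega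
      rw [if_pos h2, if_pos h3, List.getD_append_right _ _ _ _ h]
    · have : ¬ (n - m.length < t.length) := by omega
      rw [if_neg (not_lt.mpr h2), if_neg this]
      congr 1; omega

theorem cat_tail_inj {m : List Bool} {a b : Cantor} (h : cat m a = cat m b) : a = b := by
  funext n
  have := congrFun h (n + m.length)
  simpa [cat] using this

theorem cat_apply_lt {m : List Bool} {x : Cantor} {n : ℕ} (h : n < m.length) :
    cat m x n = m.getD n false := by simp [cat, h]

theorem cat_apply_ge {m : List Bool} {x : Cantor} {n : ℕ} (h : m.length ≤ n) :
    cat m x n = x (n - m.length) := by simp [cat, not_lt.mpr h]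

/-- comparability: if `cat u a = cat v b` and `|u| ≤ |v|` then `v = u ++ v.drop |u|`. -/
theorem append_drop_of_cat_eq {u v : List Bool} {a b : Cantor}
    (h : cat u a = cat v b) (hl : u.length ≤ v.length) :
    v = u ++ v.drop u.length := by
  apply List.ext_getElem
  · simp; omega
  · intro n hn hn2
    rcases lt_or_ge n u.length with hc | hc
    · have h1 := congrFun h n
      rw [cat_apply_lt hc, cat_apply_lt hn] at h1
      rw [List.getElem_append_left hc]
      have : u.getD n false = u[n] := List.getD_eq_getElem u false hc
      rw [this] at h1
      have : v.getD n false = v[n] := List.getD_eq_getElem v false hn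
      rw [this] at h1
      exact h1.symm
    · rw [List.getElem_append_right (le_of_not_gt (not_lt.mpr hc))]
      simp [List.getElem_drop]
      congr 1
      omega

theorem cat_cat_drop {u v : List Bool} {a b : Cantor}
    (h : cat u a = cat v b) (hl : u.length ≤ v.length) :
    cat v b = cat u (cat (v.drop u.length) b) := by
  conv_lhs => rw [append_drop_of_cat_eq h hl]
  rw [cat_append]

/-- if `cat w z = cat w' z` for all `z` then `w = w'`. -/
theorem word_eq_of_cat_eq {w w' : List Bool} (h : ∀ z, cat w z = cat w' z) : w = w' := by
  -- first, lengths are equal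
  wlog hl : w.length ≤ w'.length generalizing w w'
  · exact (this (fun z => (h z).symm) (le_of_not_ge hl)).symm
  have hd := append_drop_of_cat_eq (h (fun _ => false)) hl
  by_cases hn : w'.length = w.length
  · rw [hd, List.drop_eq_nil_iff.mpr (by omega), List.append_nil]
  · exfalso
    set t := w'.drop w.length with ht
    have htne : t ≠ [] := by
      simp only [ht, ne_eq, List.drop_eq_nil_iff]; omega
    -- choose z disagreeing with t at 0
    set c := t.getD 0 false with hc
    have h1 := congrFun (h (fun _ => !c)) w.length
    rw [cat_apply_ge (le_refl _)] at h1
    rw [hd] at h1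
    have htl : 0 < t.length := List.length_pos_iff.mpr htne
    have hlt : w.length < (w ++ t).length := by
      simp only [List.length_append]; omega
    rw [cat_apply_lt hlt] at h1
    have : (w ++ t).getD w.length false = t.getD 0 false := by
      rw [List.getD_eq_getElem _ _ hlt, List.getElem_append_right (le_refl _),
        List.getD_eq_getElem _ _ (by simpa using htl)]
      simp
    rw [this] at h1
    rw [hc] at h1
    simp [List.getD] at h1

-- cylinder membership
theorem mem_cyl_cat (m : List Bool) (y : Cantor) : cat m y ∈ cyl m := ⟨y, rfl⟩

theorem cat_mem_cyl_iff {m w : List Bool} {y : Cantor} (h : cat m y ∈ cyl w)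
    (hl : w.length ≤ m.length) : m = w ++ m.drop w.length := by
  obtain ⟨t, ht⟩ := h
  exact append_drop_of_cat_eq ht.symm hl

/-- the prefix of length N of x -/
def firstN (x : Cantor) (N : ℕ) : List Bool := List.ofFn (fun i : Fin N => x i)

@[simp] theorem firstN_length (x : Cantor) (N : ℕ) : (firstN x N).length = N := by
  simp [firstN]

theorem cat_firstN (x : Cantor) (N : ℕ) : x = cat (firstN x N) (fun n => x (n + N)) := by
  funext n
  rcases lt_or_ge n N with h | h
  · rw [cat_apply_lt (by simpa using h)]
    rw [List.getD_eq_getElem _ _ (by simpa using h)]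
    simp [firstN]
  · rw [cat_apply_ge (by simpa using h)]
    simp only [firstN_length]
    congr 1; omega

theorem firstN_cat {m : List Bool} (y : Cantor) : firstN (cat m y) m.length = m := by
  apply List.ext_getElem (by simp)
  intro n hn hn2
  simp only [firstN, List.getElem_ofFn]
  rw [cat_apply_lt hn2, List.getD_eq_getElem _ _ hn2]

theorem mem_cyl_iff_firstN {w : List Bool} {x : Cantor} :
    x ∈ cyl w ↔ firstN x w.length = w := by
  constructor
  · rintro ⟨y, rfl⟩; exact firstN_cat y
  · intro h
    refine ⟨fun n => x (n + w.length), ?_⟩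
    conv_lhs => rw [cat_firstN x w.length, h]

theorem isOpen_cyl (w : List Bool) : IsOpen (cyl w) := by
  have : cyl w = ⋂ i : Fin w.length, {x : Cantor | x i = w.getD i false} := by
    ext x
    simp only [Set.mem_iInter, Set.mem_setOf_eq]
    constructor
    · rintro ⟨y, rfl⟩ i
      rw [cat_apply_lt i.isLt]
    · intro hx
      rw [mem_cyl_iff_firstN]
      apply List.ext_getElem (by simp)
      intro n hn hn2
      simp only [firstN, List.getElem_ofFn]
      rw [hx ⟨n, hn2⟩, List.getD_eq_getElem _ _ hn2]
  rw [this]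
  refine isOpen_iInter_of_finite fun i => ?_
  have : {x : Cantor | x i = w.getD i false} =
      (fun x : Cantor => x (i : ℕ)) ⁻¹' {w.getD i false} := rfl
  rw [this]
  exact IsOpen.preimage (continuous_apply (i : ℕ)) (isOpen_discrete _)

/-- `(m, w)` is an adapted pair for `v`. -/
def Adp (v : Cantor ≃ₜ Cantor) (m w : List Bool) : Prop :=
  ∀ z : Cantor, v (cat m z) = cat w z

theorem Adp.append {v m w} (h : Adp v m w) (t : List Bool) :
    Adp v (m ++ t) (w ++ t) := by
  intro z; rw [cat_append, cat_append]; exact h (cat t z)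

theorem memV_exists_adp {v} (hv : memV v) (x : Cantor) :
    ∃ m w, x ∈ cyl m ∧ Adp v m w := by
  obtain ⟨m, w, y, hx, hA⟩ := hv x
  exact ⟨m, w, ⟨y, hx⟩, hA⟩

/-- two adapted pairs whose sources both contain `x` are comparable. -/
theorem adp_pair_ext {v : Cantor ≃ₜ Cantor} {m₁ w₁ m₂ w₂ : List Bool} {x : Cantor}
    (h1 : x ∈ cyl m₁) (hA1 : Adp v m₁ w₁) (h2 : x ∈ cyl m₂) (hA2 : Adp v m₂ w₂)
    (hl : m₁.length ≤ m₂.length) :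
    m₂ = m₁ ++ m₂.drop m₁.length ∧ w₂ = w₁ ++ m₂.drop m₁.length := by
  obtain ⟨y1, hy1⟩ := h1
  obtain ⟨y2, hy2⟩ := h2
  have hm : m₂ = m₁ ++ m₂.drop m₁.length :=
    append_drop_of_cat_eq (hy1 ▸ hy2.symm ▸ rfl : cat m₁ y1 = cat m₂ y2) hl
  refine ⟨hm, ?_⟩
  have h3 : Adp v (m₁ ++ m₂.drop m₁.length) (w₁ ++ m₂.drop m₁.length) := hA1.append _
  rw [← hm] at h3
  exact (word_eq_of_cat_eq (fun z => by rw [← hA2 z, h3 z])).symm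

/-- uniform adaptedness, via compactness. -/
theorem memV_uniform {v} (hv : memV v) :
    ∃ N : ℕ, ∀ m : List Bool, m.length = N → ∃ w, Adp v m w := by
  classical
  choose M W Y hx hA using hv
  have hcov : (Set.univ : Set Cantor) ⊆ ⋃ x : Cantor, cyl (M x) := by
    intro x _
    exact Set.mem_iUnion.mpr ⟨x, ⟨Y x, hx x⟩⟩
  obtain ⟨s, hs⟩ := isCompact_univ.elim_finite_subcover (fun x : Cantor => cyl (M x))
    (fun x => isOpen_cyl _) hcov
  refine ⟨s.sup (fun x => (M x).length) , fun m hm => ?_⟩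
  have : cat m (fun _ => false) ∈ ⋃ x ∈ s, cyl (M x) := hs (Set.mem_univ _)
  obtain ⟨x₀, hx₀s, hx₀⟩ := Set.mem_iUnion₂.mp this
  have hlen : (M x₀).length ≤ m.length := by
    rw [hm]; exact Finset.le_sup (f := fun x => (M x).length) hx₀s
  set t := m.drop (M x₀).length with htdef
  have hmm : m = M x₀ ++ t := cat_mem_cyl_iff hx₀ hlen
  refine ⟨W x₀ ++ t, ?_⟩
  rw [hmm]
  exact Adp.append (hA x₀) _

/-- refined uniformity: the source words can be made arbitrarily long (input side):
for each `N₀` there is `N` such that every source word of length `N` has an adapted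
output word of length at least `N₀`. -/
theorem memV_uniform_long {v} (hv : memV v) (k : ℕ) :
    ∃ N : ℕ, ∀ m : List Bool, m.length = N → ∃ w, k ≤ w.length ∧ Adp v m w := by
  obtain ⟨L, hL⟩ := memV_uniform hv
  refine ⟨L + k, fun m hm => ?_⟩
  obtain ⟨w₀, hw₀⟩ := hL (m.take L) (by simp [hm])
  refine ⟨w₀ ++ m.drop L, by simp; omega, ?_⟩
  have := hw₀.append (m.drop L)
  rwa [List.take_append_drop] at this

theorem memV_refl : memV (Homeomorph.refl Cantor) := by
  intro x
  exact ⟨[], [], x, (cat_nil x).symm, fun z => rfl⟩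

theorem memV_symm {v} (hv : memV v) : memV v.symm := by
  intro x
  obtain ⟨m, w, ⟨y, hy⟩, hA⟩ := memV_exists_adp hv (v.symm x)
  refine ⟨w, m, y, ?_, fun z => ?_⟩
  · have : v (v.symm x) = v (cat m y) := congrArg v hy
    rw [Homeomorph.apply_symm_apply, hA y] at this
    exact this
  · have := hA z
    have h2 := congrArg v.symm this
    rw [Homeomorph.symm_apply_apply] at h2
    exact h2.symm

/-- composable adapted pairs for `u ∘ v`. -/
theorem composable_pairs {u v} (hu : memV u) (hv : memV v) (x : Cantor) :
    ∃ m w w', x ∈ cyl m ∧ Adp v m w ∧ Adp u w w' := by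
  obtain ⟨m₁, w₁, ⟨y₁, hy₁⟩, hA₁⟩ := memV_exists_adp hv x
  obtain ⟨m₂, w₂, hvx₂, hA₂⟩ := memV_exists_adp hu (v x)
  have hvx₁ : v x ∈ cyl w₁ := ⟨y₁, by rw [hy₁, hA₁ y₁]⟩
  rcases le_total w₁.length m₂.length with hl | hl
  · -- m₂ = w₁ ++ t
    obtain ⟨y₂, hy₂⟩ := hvx₂
    set t := m₂.drop w₁.length with htdef
    have hm : m₂ = w₁ ++ t := by
      obtain ⟨z₁, hz₁⟩ := hvx₁
      exact append_drop_of_cat_eq (hz₁.symm.trans hy₂) hl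
    -- x ∈ cyl (m₁ ++ t)
    have hyt : y₁ = cat t y₂ := by
      apply cat_tail_inj (m := w₁)
      rw [← cat_append, ← hm, ← hy₂, hy₁, hA₁ y₁]
    refine ⟨m₁ ++ t, w₁ ++ t, w₂, ⟨y₂, by rw [hy₁, hyt, cat_append]⟩,
      hA₁.append t, ?_⟩
    rwa [← hm]
  · -- w₁ = m₂ ++ t
    set t := w₁.drop m₂.length with htdef
    have hm : w₁ = m₂ ++ t := by
      obtain ⟨z₁, hz₁⟩ := hvx₁
      obtain ⟨y₂, hy₂⟩ := hvx₂
      exact append_drop_of_cat_eq (hy₂.symm.trans hz₁) hl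
    refine ⟨m₁, w₁, w₂ ++ t, ⟨y₁, hy₁⟩, hA₁, ?_⟩
    rw [hm]
    exact hA₂.append t

theorem memV_trans {u v} (hv : memV v) (hu : memV u) : memV (v.trans u) := by
  intro x
  obtain ⟨m, w, w', ⟨y, hy⟩, hA₁, hA₂⟩ := composable_pairs hu hv x
  exact ⟨m, w', y, hy, fun z => by
    simp only [Homeomorph.trans_apply, hA₁ z, hA₂ z]⟩

/-- `f` is constant on all cylinders of length `N`. -/
def LCN {Γ : Type*} (f : Cantor → Γ) (N : ℕ) : Prop :=
  ∀ m : List Bool, m.length = N → ∀ y z : Cantor, f (cat m y) = f (cat m z)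

theorem LCN.mono {Γ : Type*} {f : Cantor → Γ} {N N' : ℕ} (h : LCN f N) (hle : N ≤ N') :
    LCN f N' := by
  intro m hm y z
  have hsplit : m = m.take N ++ m.drop N := (List.take_append_drop N m).symm
  rw [hsplit, cat_append, cat_append]
  exact h (m.take N) (by simp [hm]; omega) _ _

/-- the uniform partition of level N. -/
def uniformP (N : ℕ) : Finset (List Bool) :=
  (Finset.univ : Finset (Fin N → Bool)).image (fun f => List.ofFn f)

theorem mem_uniformP {N : ℕ} {w : List Bool} : w ∈ uniformP N ↔ w.length = N := by
  simp only [uniformP, Finset.mem_image, Finset.mem_univ, true_and]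
  constructor
  · rintro ⟨f, rfl⟩; simp
  · intro h
    refine ⟨fun i => w.getD i false, ?_⟩
    apply List.ext_getElem (by simp [h])
    intro n h1 h2
    simp only [List.getElem_ofFn]
    exact List.getD_eq_getElem _ _ h2

theorem isSDP_uniformP (N : ℕ) : IsSDP (uniformP N) := by
  intro x
  refine ⟨firstN x N, ⟨mem_uniformP.mpr (by simp), ?_⟩, ?_⟩
  · rw [mem_cyl_iff_firstN]; simp
  · rintro w ⟨hw, hx⟩
    rw [mem_uniformP] at hw
    rw [mem_cyl_iff_firstN, hw] at hx
    exact hx.symm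

theorem isLC_iff_LCN {Γ : Type*} {f : Cantor → Γ} : IsLC f ↔ ∃ N, LCN f N := by
  constructor
  · rintro ⟨P, hP, hf⟩
    refine ⟨P.sup List.length, fun m hm y z => ?_⟩
    obtain ⟨w, ⟨hwP, hwx⟩, -⟩ := hP (cat m y)
    have hl : w.length ≤ m.length := by
      rw [hm]; exact Finset.le_sup hwP
    set t := m.drop w.length with htdef
    have hmw : m = w ++ t := cat_mem_cyl_iff hwx hl
    rw [hmw, cat_append, cat_append]
    exact hf w hwP _ _
  · rintro ⟨N, hN⟩
    exact ⟨uniformP N, isSDP_uniformP N, fun w hw y z =>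
      hN w (mem_uniformP.mp hw) y z⟩

theorem isLC_mul {Γ : Type*} [Group Γ] {f g : Cantor → Γ} (hf : IsLC f) (hg : IsLC g) :
    IsLC (f * g) := by
  rw [isLC_iff_LCN] at *
  obtain ⟨N, hN⟩ := hf
  obtain ⟨M, hM⟩ := hg
  exact ⟨max N M, fun m hm y z => by
    simp only [Pi.mul_apply, hN.mono (le_max_left N M) m hm y z,
      hM.mono (le_max_right N M) m hm y z]⟩

theorem isLC_const {Γ : Type*} (c : Γ) : IsLC (fun _ => c) :=
  isLC_iff_LCN.mpr ⟨0, fun _ _ _ _ => rfl⟩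

section GroupPart
variable {Γ : Type*} [Group Γ]

variable (α₀ α₁ : Γ ≃* Γ)

theorem alphaWord_nil : alphaWord α₀ α₁ [] = MulEquiv.refl Γ := rfl

theorem alphaWord_foldl (e : Γ ≃* Γ) (t : List Bool) :
    t.foldl (fun acc b => acc.trans (if b then α₁ else α₀)) e =
      e.trans (alphaWord α₀ α₁ t) := by
  induction t generalizing e with
  | nil => ext g; rfl
  | cons b t ih =>
    simp only [List.foldl_cons, alphaWord]
    rw [ih, ih (MulEquiv.trans _ _)]
    ext g; rfl

theorem alphaWord_append (m t : List Bool) :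
    alphaWord α₀ α₁ (m ++ t) = (alphaWord α₀ α₁ m).trans (alphaWord α₀ α₁ t) := by
  rw [alphaWord, List.foldl_append, ← alphaWord, alphaWord_foldl]

theorem alphaWord_concat (m : List Bool) (b : Bool) :
    alphaWord α₀ α₁ (m ++ [b]) = (alphaWord α₀ α₁ m).trans (if b then α₁ else α₀) := by
  rw [alphaWord_append]; ext g; rfl

theorem tau_form_ext (m w t : List Bool) :
    (alphaWord α₀ α₁ (m ++ t)).trans (alphaWord α₀ α₁ (w ++ t)).symm
      = (alphaWord α₀ α₁ m).trans (alphaWord α₀ α₁ w).symm := by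
  ext g
  simp [alphaWord_append, MulEquiv.trans_apply]

theorem tauEquiv_eq {v : Cantor ≃ₜ Cantor} {m w : List Bool} {x : Cantor}
    (hx : x ∈ cyl m) (hA : Adp v m w) :
    tauEquiv α₀ α₁ v x = (alphaWord α₀ α₁ m).trans (alphaWord α₀ α₁ w).symm := by
  have hex : ∃ p : List Bool × List Bool,
      x ∈ cyl p.1 ∧ ∀ z : Cantor, v (cat p.1 z) = cat p.2 z := ⟨(m, w), hx, hA⟩
  rw [tauEquiv, dif_pos hex]
  have h1 : x ∈ cyl hex.choose.1 := hex.choose_spec.1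
  have h2 : Adp v hex.choose.1 hex.choose.2 := hex.choose_spec.2
  rcases le_total m.length hex.choose.1.length with hl | hl
  · obtain ⟨e1, e2⟩ := adp_pair_ext hx hA h1 h2 hl
    rw [e1, e2, tau_form_ext]
  · obtain ⟨e1, e2⟩ := adp_pair_ext h1 h2 hx hA hl
    rw [e1, e2, tau_form_ext]

theorem tauEquiv_refl (x : Cantor) :
    tauEquiv α₀ α₁ (Homeomorph.refl Cantor) x = MulEquiv.refl Γ := by
  rw [tauEquiv_eq α₀ α₁ (m := []) (w := []) ⟨x, (cat_nil x).symm⟩ (fun z => rfl)]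
  ext g; simp [alphaWord_nil]

theorem tauEquiv_cocycle {u v : Cantor ≃ₜ Cantor} (hu : memV u) (hv : memV v)
    (x : Cantor) :
    tauEquiv α₀ α₁ (v.trans u) x =
      (tauEquiv α₀ α₁ v x).trans (tauEquiv α₀ α₁ u (v x)) := by
  obtain ⟨m, w, w', hx, hA1, hA2⟩ := composable_pairs hu hv x
  obtain ⟨y, hy⟩ := id hx
  have hvx : v x ∈ cyl w := ⟨y, by rw [hy, hA1 y]⟩
  have hA3 : Adp (v.trans u) m w' := fun z => by
    simp only [Homeomorph.trans_apply, hA1 z, hA2 z]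
  rw [tauEquiv_eq α₀ α₁ hx hA1, tauEquiv_eq α₀ α₁ hvx hA2, tauEquiv_eq α₀ α₁ hx hA3]
  ext g; simp [MulEquiv.trans_apply]

end GroupPart

section PermAlg
variable {Γ : Type*} [Group Γ] (α₀ α₁ : Γ ≃* Γ)

theorem permOf_apply (a : Cantor → Γ) (v : Cantor ≃ₜ Cantor) (p : Cantor × Γ) :
    permOf α₀ α₁ a v p = (v p.1, a (v p.1) * tauEquiv α₀ α₁ v p.1 p.2) := rfl

theorem permOf_one : permOf α₀ α₁ (fun _ => 1) (Homeomorph.refl Cantor) = 1 := by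
  apply Equiv.ext; rintro ⟨x, g⟩
  simp [permOf_apply, tauEquiv_refl]

theorem permOf_mul {a b : Cantor → Γ} {u v : Cantor ≃ₜ Cantor}
    (hu : memV u) (hv : memV v) :
    permOf α₀ α₁ a u * permOf α₀ α₁ b v =
      permOf α₀ α₁
        (fun y => a y * tauEquiv α₀ α₁ u (u.symm y) (b (u.symm y))) (v.trans u) := by
  apply Equiv.ext; rintro ⟨x, g⟩
  have hmul : ∀ p : Cantor × Γ,
      (permOf α₀ α₁ a u * permOf α₀ α₁ b v) p =
        permOf α₀ α₁ a u (permOf α₀ α₁ b v p) := fun p => rfl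
  rw [hmul]
  simp only [permOf_apply, Homeomorph.trans_apply]
  apply Prod.ext
  · rfl
  · simp only [Homeomorph.symm_apply_apply]
    rw [tauEquiv_cocycle α₀ α₁ hu hv x]
    simp only [MulEquiv.trans_apply, map_mul, mul_assoc]

theorem permOf_inv {a : Cantor → Γ} {v : Cantor ≃ₜ Cantor} (hv : memV v) :
    (permOf α₀ α₁ a v)⁻¹ =
      permOf α₀ α₁ (fun z => (tauEquiv α₀ α₁ v z).symm ((a (v z))⁻¹)) v.symm := by
  apply inv_eq_of_mul_eq_one_right
  rw [permOf_mul α₀ α₁ hv (memV_symm hv)]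
  have h1 : v.symm.trans v = Homeomorph.refl Cantor := by
    ext z; simp
  rw [h1]
  have h2 : (fun y => a y * tauEquiv α₀ α₁ v (v.symm y)
      ((tauEquiv α₀ α₁ v (v.symm y)).symm ((a (v (v.symm y)))⁻¹))) = fun _ : Cantor => (1:Γ) := by
    funext y; simp
  rw [h2, permOf_one]

theorem permOf_inj {a b : Cantor → Γ} {u v : Cantor ≃ₜ Cantor}
    (h : permOf α₀ α₁ a u = permOf α₀ α₁ b v) : a = b ∧ u = v := by
  have h1 : ∀ x : Cantor, u x = v x ∧ a (u x) = b (v x) := by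
    intro x
    have := congrFun (congrArg (fun (e : Equiv.Perm (Cantor × Γ)) => (e : Cantor × Γ → Cantor × Γ)) h) (x, 1)
    simp only [permOf_apply, map_one, mul_one] at this
    exact ⟨congrArg Prod.fst this, congrArg Prod.snd this⟩
  constructor
  · funext y
    have := (h1 (u.symm y)).2
    rw [Homeomorph.apply_symm_apply] at this
    rw [this, (h1 (u.symm y)).1.symm, Homeomorph.apply_symm_apply]
  · ext x n; rw [(h1 x).1]

def Gelem (p : Equiv.Perm (Cantor × Γ)) : Prop :=
  ∃ a v, IsLC a ∧ memV v ∧ p = permOf α₀ α₁ a v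

theorem isLC_transport {u : Cantor ≃ₜ Cantor} (hu : memV u) {b : Cantor → Γ}
    (hb : IsLC b) :
    IsLC (fun y => tauEquiv α₀ α₁ u (u.symm y) (b (u.symm y))) := by
  rw [isLC_iff_LCN] at hb ⊢
  obtain ⟨Nb, hNb⟩ := hb
  obtain ⟨N, hN⟩ := memV_uniform_long (memV_symm hu) Nb
  refine ⟨N, fun w hw y z => ?_⟩
  obtain ⟨m, hml, hAm⟩ := hN w hw
  have hAu : Adp u m w := by
    intro t
    have := hAm t
    have h2 := congrArg u this
    rw [Homeomorph.apply_symm_apply] at h2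
    exact h2.symm
  have hsy : ∀ t : Cantor, u.symm (cat w t) = cat m t := hAm
  dsimp only
  rw [hsy y, hsy z]
  have htau : ∀ t : Cantor, tauEquiv α₀ α₁ u (cat m t) =
      (alphaWord α₀ α₁ m).trans (alphaWord α₀ α₁ w).symm :=
    fun t => tauEquiv_eq α₀ α₁ (mem_cyl_cat m t) hAu
  rw [htau y, htau z, (hNb.mono hml) m rfl y z]

theorem isLC_inv_transport {v : Cantor ≃ₜ Cantor} (hv : memV v) {a : Cantor → Γ}
    (ha : IsLC a) :
    IsLC (fun z => (tauEquiv α₀ α₁ v z).symm ((a (v z))⁻¹)) := by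
  rw [isLC_iff_LCN] at ha ⊢
  obtain ⟨Na, hNa⟩ := ha
  obtain ⟨N, hN⟩ := memV_uniform_long hv Na
  refine ⟨N, fun m hm y z => ?_⟩
  obtain ⟨w, hwl, hA⟩ := hN m hm
  have htau : ∀ t : Cantor, tauEquiv α₀ α₁ v (cat m t) =
      (alphaWord α₀ α₁ m).trans (alphaWord α₀ α₁ w).symm :=
    fun t => tauEquiv_eq α₀ α₁ (mem_cyl_cat m t) hA
  dsimp only
  rw [htau y, htau z, hA y, hA z, (hNa.mono hwl) w rfl y z]

theorem gelem_one : Gelem α₀ α₁ 1 :=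
  ⟨fun _ => 1, Homeomorph.refl Cantor, isLC_const 1, memV_refl, (permOf_one α₀ α₁).symm⟩

theorem gelem_mul {p q} (hp : Gelem α₀ α₁ p) (hq : Gelem α₀ α₁ q) :
    Gelem α₀ α₁ (p * q) := by
  obtain ⟨a, u, ha, hu, rfl⟩ := hp
  obtain ⟨b, v, hb, hv, rfl⟩ := hq
  exact ⟨_, _, isLC_mul ha (isLC_transport α₀ α₁ hu hb), memV_trans hv hu,
    permOf_mul α₀ α₁ hu hv⟩

theorem gelem_inv {p} (hp : Gelem α₀ α₁ p) : Gelem α₀ α₁ p⁻¹ := by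
  obtain ⟨a, v, ha, hv, rfl⟩ := hp
  exact ⟨_, _, isLC_inv_transport α₀ α₁ hv ha, memV_symm hv, permOf_inv α₀ α₁ hv⟩

theorem mem_Gsub_iff {p : Equiv.Perm (Cantor × Γ)} :
    p ∈ Gsub Γ α₀ α₁ ↔ Gelem α₀ α₁ p := by
  constructor
  · intro hp
    refine Subgroup.closure_induction ?_ (gelem_one α₀ α₁)
      (fun _ _ _ _ => gelem_mul α₀ α₁) (fun _ _ => gelem_inv α₀ α₁) hp
    intro q hq
    exact hq
  · intro hp
    exact Subgroup.subset_closure hp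

end PermAlg

section SPerm

/-- the coordinatewise permutation homeomorphism of the Cantor space. -/
def sHomeo (σ : Equiv.Perm Bool) : Cantor ≃ₜ Cantor where
  toEquiv :=
  { toFun := fun x n => σ (x n)
    invFun := fun x n => σ.symm (x n)
    left_inv := fun x => funext fun n => σ.symm_apply_apply (x n)
    right_inv := fun x => funext fun n => σ.apply_symm_apply (x n) }
  continuous_toFun := continuous_pi fun n =>
    Continuous.comp continuous_of_discreteTopology (continuous_apply n)
  continuous_invFun := continuous_pi fun n =>
    Continuous.comp continuous_of_discreteTopology (continuous_apply n)

theorem sHomeo_apply (σ : Equiv.Perm Bool) (x : Cantor) (n : ℕ) :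
    sHomeo σ x n = σ (x n) := rfl

theorem sHomeo_symm (σ : Equiv.Perm Bool) : (sHomeo σ).symm = sHomeo σ.symm := rfl

theorem sHomeo_cat (σ : Equiv.Perm Bool) (m : List Bool) (z : Cantor) :
    sHomeo σ (cat m z) = cat (m.map σ) (sHomeo σ z) := by
  funext n
  rcases lt_or_ge n m.length with hn | hn
  · rw [sHomeo_apply, cat_apply_lt hn, cat_apply_lt (by simpa using hn),
      List.getD_eq_getElem _ _ hn, List.getD_eq_getElem _ _ (by simpa using hn)]
    simp
  · rw [sHomeo_apply, cat_apply_ge hn, cat_apply_ge (by simpa using hn)]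
    simp [sHomeo_apply]

theorem sHomeo_symm_symm (σ : Equiv.Perm Bool) : (sHomeo σ.symm).symm = sHomeo σ := by
  rw [sHomeo_symm, Equiv.symm_symm]

theorem mem_cyl_map {σ : Equiv.Perm Bool} {x : Cantor} {m : List Bool} (hx : x ∈ cyl m) :
    sHomeo σ x ∈ cyl (m.map σ) := by
  obtain ⟨y, rfl⟩ := hx
  exact ⟨sHomeo σ y, sHomeo_cat σ m y⟩

/-- conjugation of a homeomorphism by `sHomeo σ`. -/
def conjS (σ : Equiv.Perm Bool) (v : Cantor ≃ₜ Cantor) : Cantor ≃ₜ Cantor :=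
  ((sHomeo σ).symm.trans v).trans (sHomeo σ)

theorem conjS_apply (σ : Equiv.Perm Bool) (v : Cantor ≃ₜ Cantor) (x : Cantor) :
    conjS σ v x = sHomeo σ (v ((sHomeo σ).symm x)) := rfl

theorem conjS_symm_apply (σ : Equiv.Perm Bool) (v : Cantor ≃ₜ Cantor) (x : Cantor) :
    (conjS σ v).symm x = sHomeo σ (v.symm ((sHomeo σ).symm x)) := rfl

theorem map_map_symm (σ : Equiv.Perm Bool) (m : List Bool) :
    (m.map σ).map σ.symm = m := by
  rw [List.map_map]
  simp

theorem Adp_conjS {σ : Equiv.Perm Bool} {v : Cantor ≃ₜ Cantor} {m w : List Bool}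
    (hA : Adp v m w) : Adp (conjS σ v) (m.map σ) (w.map σ) := by
  intro z
  rw [conjS_apply, sHomeo_symm, sHomeo_cat, map_map_symm, hA, sHomeo_cat,
    ← sHomeo_symm, Homeomorph.apply_symm_apply]

theorem memV_conjS {σ : Equiv.Perm Bool} {v : Cantor ≃ₜ Cantor} (hv : memV v) :
    memV (conjS σ v) := by
  intro x
  obtain ⟨m, w, hx, hA⟩ := memV_exists_adp hv ((sHomeo σ).symm x)
  obtain ⟨y, hy⟩ := hx
  refine ⟨m.map σ, w.map σ, sHomeo σ y, ?_, Adp_conjS hA⟩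
  have := congrArg (sHomeo σ) hy
  rwa [Homeomorph.apply_symm_apply, sHomeo_cat] at this

theorem conjS_trans (σ : Equiv.Perm Bool) (u v : Cantor ≃ₜ Cantor) :
    conjS σ (v.trans u) = (conjS σ v).trans (conjS σ u) := by
  ext x n
  simp [conjS_apply, Homeomorph.trans_apply]

end SPerm

section Data
variable {Γ Γ' : Type*} [Group Γ] [Group Γ']

/-- the word cocycle `H_m`. -/
def Hword (α₀ α₁ : Γ ≃* Γ) (β : Γ ≃* Γ') (h : Bool → Γ') (m : List Bool) : Γ' :=
  m.foldl (fun t b => h b * β ((if b then α₁ else α₀) (β.symm t))) 1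

variable (α₀ α₁ : Γ ≃* Γ) (α₀' α₁' : Γ' ≃* Γ') (β : Γ ≃* Γ') (σ : Equiv.Perm Bool)
  (h : Bool → Γ')

theorem Hword_nil : Hword α₀ α₁ β h [] = 1 := rfl

theorem Hword_concat (m : List Bool) (b : Bool) :
    Hword α₀ α₁ β h (m ++ [b]) =
      h b * β ((if b then α₁ else α₀) (β.symm (Hword α₀ α₁ β h m))) := by
  rw [Hword, List.foldl_append]
  rfl

variable (hcomp : ∀ (i : Bool) (g : Γ'),
  (if σ i then α₁' else α₀') g = h i * β ((if i then α₁ else α₀) (β.symm g)) * (h i)⁻¹)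

include hcomp

/-- Lemma (A): conjugation formula for `alphaWord` along `σ`-relabelled words. -/
theorem alphaWord_map (m : List Bool) (g : Γ') :
    alphaWord α₀' α₁' (m.map σ) g =
      Hword α₀ α₁ β h m * β (alphaWord α₀ α₁ m (β.symm g)) * (Hword α₀ α₁ β h m)⁻¹ := by
  induction m using List.reverseRecOn generalizing g with
  | nil => simp [alphaWord_nil, Hword_nil]
  | append_singleton m b ih =>
    rw [List.map_append, List.map_cons, List.map_nil, alphaWord_concat,
      MulEquiv.trans_apply, ih, hcomp b, alphaWord_concat, Hword_concat,
      MulEquiv.trans_apply]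
    simp only [map_mul, map_inv, MulEquiv.apply_symm_apply, MulEquiv.symm_apply_apply,
      mul_inv_rev, inv_inv]
    group

/-- Lemma (A⁻¹). -/
theorem alphaWord_map_symm (m : List Bool) (g : Γ') :
    (alphaWord α₀' α₁' (m.map σ)).symm g =
      β ((alphaWord α₀ α₁ m).symm
        (β.symm ((Hword α₀ α₁ β h m)⁻¹ * g * Hword α₀ α₁ β h m))) := by
  rw [MulEquiv.symm_apply_eq, alphaWord_map α₀ α₁ α₀' α₁' β σ h hcomp]
  simp only [MulEquiv.symm_apply_apply, MulEquiv.apply_symm_apply]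
  group

end Data

section Data2
variable {Γ Γ' : Type*} [Group Γ] [Group Γ']
variable (α₀ α₁ : Γ ≃* Γ) (β : Γ ≃* Γ') (h : Bool → Γ')

theorem Hword_quot (m w r : List Bool) :
    (Hword α₀ α₁ β h (m ++ r))⁻¹ * Hword α₀ α₁ β h (w ++ r) =
      β (alphaWord α₀ α₁ r (β.symm ((Hword α₀ α₁ β h m)⁻¹ * Hword α₀ α₁ β h w))) := by
  induction r using List.reverseRecOn with
  | nil => simp [alphaWord_nil]
  | append_singleton r b ih =>
    rw [← List.append_assoc, ← List.append_assoc, Hword_concat, Hword_concat,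
      alphaWord_concat, MulEquiv.trans_apply]
    simp only [mul_inv_rev]
    rw [mul_assoc, inv_mul_cancel_left]
    simp only [← map_inv, ← map_mul]
    rw [ih]
    simp only [MulEquiv.symm_apply_apply]

end Data2

section Data3
variable {Γ Γ' : Type*} [Group Γ] [Group Γ']
variable (α₀ α₁ : Γ ≃* Γ) (β : Γ ≃* Γ') (h : Bool → Γ')

/-- the value of the correcting cocycle on an adapted pair. -/
def Kform (m w : List Bool) : Γ' :=
  β ((alphaWord α₀ α₁ w).symm (β.symm ((Hword α₀ α₁ β h m)⁻¹ * Hword α₀ α₁ β h w)))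

theorem Kform_append (m w t : List Bool) :
    Kform α₀ α₁ β h (m ++ t) (w ++ t) = Kform α₀ α₁ β h m w := by
  rw [Kform, Kform, Hword_quot, MulEquiv.symm_apply_apply, alphaWord_append]
  simp only [MulEquiv.symm_trans_apply, MulEquiv.symm_apply_apply]

open Classical in
/-- the correcting cocycle as a function of the source point. -/
noncomputable def KX (v : Cantor ≃ₜ Cantor) (x : Cantor) : Γ' :=
  if hq : ∃ q : List Bool × List Bool, x ∈ cyl q.1 ∧ Adp v q.1 q.2 then
    Kform α₀ α₁ β h hq.choose.1 hq.choose.2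
  else 1

theorem KX_eval {v : Cantor ≃ₜ Cantor} {m w : List Bool} {x : Cantor}
    (hx : x ∈ cyl m) (hA : Adp v m w) :
    KX α₀ α₁ β h v x = Kform α₀ α₁ β h m w := by
  have hex : ∃ q : List Bool × List Bool, x ∈ cyl q.1 ∧ Adp v q.1 q.2 := ⟨(m, w), hx, hA⟩
  rw [KX, dif_pos hex]
  have h1 : x ∈ cyl hex.choose.1 := hex.choose_spec.1
  have h2 : Adp v hex.choose.1 hex.choose.2 := hex.choose_spec.2
  rcases le_total m.length hex.choose.1.length with hl | hl
  · obtain ⟨e1, e2⟩ := adp_pair_ext hx hA h1 h2 hl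
    rw [e1, e2, Kform_append]
  · obtain ⟨e1, e2⟩ := adp_pair_ext h1 h2 hx hA hl
    rw [e1, e2, Kform_append]

end Data3

section Data4
variable {Γ Γ' : Type*} [Group Γ] [Group Γ']
variable (α₀ α₁ : Γ ≃* Γ) (α₀' α₁' : Γ' ≃* Γ') (β : Γ ≃* Γ') (σ : Equiv.Perm Bool)
  (h : Bool → Γ')
variable (hcomp : ∀ (i : Bool) (g : Γ'),
  (if σ i then α₁' else α₀') g = h i * β ((if i then α₁ else α₀) (β.symm g)) * (h i)⁻¹)

include hcomp

theorem Kident1 (w w' : List Bool) (c : Γ) :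
    Kform α₀ α₁ β h w w' *
      (alphaWord α₀' α₁' (w'.map σ)).symm ((alphaWord α₀' α₁' (w.map σ)) (β c)) =
    β ((alphaWord α₀ α₁ w').symm ((alphaWord α₀ α₁ w) c)) * Kform α₀ α₁ β h w w' := by
  rw [alphaWord_map α₀ α₁ α₀' α₁' β σ h hcomp,
    alphaWord_map_symm α₀ α₁ α₀' α₁' β σ h hcomp]
  simp only [Kform, map_mul, map_inv, MulEquiv.symm_apply_apply, MulEquiv.apply_symm_apply,
    mul_inv_rev, inv_inv]
  group

theorem Kident2 (m w w' : List Bool) :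
    Kform α₀ α₁ β h w w' *
      (alphaWord α₀' α₁' (w'.map σ)).symm
        ((alphaWord α₀' α₁' (w.map σ)) (Kform α₀ α₁ β h m w)) =
    Kform α₀ α₁ β h m w' := by
  rw [alphaWord_map α₀ α₁ α₀' α₁' β σ h hcomp,
    alphaWord_map_symm α₀ α₁ α₀' α₁' β σ h hcomp]
  simp only [Kform, map_mul, map_inv, MulEquiv.symm_apply_apply, MulEquiv.apply_symm_apply,
    mul_inv_rev, inv_inv]
  group

end Data4

section Data5
variable {Γ Γ' : Type*} [Group Γ] [Group Γ']
variable (α₀ α₁ : Γ ≃* Γ) (α₀' α₁' : Γ' ≃* Γ') (β : Γ ≃* Γ') (σ : Equiv.Perm Bool)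
  (h : Bool → Γ')

/-- the function part of the image of `a·v` under the isomorphism. -/
noncomputable def Bfun (a : Cantor → Γ) (v : Cantor ≃ₜ Cantor) : Cantor → Γ' :=
  fun y => β (a ((sHomeo σ).symm y)) *
    KX α₀ α₁ β h v (v.symm ((sHomeo σ).symm y))

theorem isLC_Bfun {a : Cantor → Γ} {v : Cantor ≃ₜ Cantor} (ha : IsLC a) (hv : memV v) :
    IsLC (Bfun α₀ α₁ β σ h a v) := by
  apply isLC_mul
  · -- first factor
    rw [isLC_iff_LCN] at ha ⊢
    obtain ⟨Na, hNa⟩ := ha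
    refine ⟨Na, fun m hm y z => ?_⟩
    dsimp only
    rw [sHomeo_symm, sHomeo_cat, sHomeo_cat]
    rw [hNa (m.map σ.symm) (by simpa using hm) _ _]
  · -- second factor
    rw [isLC_iff_LCN]
    obtain ⟨N, hN⟩ := memV_uniform (memV_symm hv)
    refine ⟨N, fun m hm y z => ?_⟩
    dsimp only
    obtain ⟨w, hw⟩ := hN (m.map σ.symm) (by simpa using hm)
    have hAvm : Adp v w (m.map σ.symm) := by
      intro t
      have := hw t
      have h2 := congrArg v this
      rw [Homeomorph.apply_symm_apply] at h2
      exact h2.symm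
    have key : ∀ t : Cantor, v.symm ((sHomeo σ).symm (cat m t)) =
        cat w ((sHomeo σ).symm t) := by
      intro t
      rw [sHomeo_symm, sHomeo_cat]
      exact hw _
    rw [key y, key z, KX_eval α₀ α₁ β h (mem_cyl_cat _ _) hAvm,
      KX_eval α₀ α₁ β h (mem_cyl_cat _ _) hAvm]

open Classical in
/-- the underlying map of the isomorphism, on all of `Perm (Cantor × Γ)`. -/
noncomputable def thetaFun (p : Equiv.Perm (Cantor × Γ)) : Equiv.Perm (Cantor × Γ') :=
  if hp : Gelem α₀ α₁ p then
    permOf α₀' α₁' (Bfun α₀ α₁ β σ h hp.choose hp.choose_spec.choose)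
      (conjS σ hp.choose_spec.choose)
  else 1

theorem thetaFun_eq {p : Equiv.Perm (Cantor × Γ)} {a : Cantor → Γ} {v : Cantor ≃ₜ Cantor}
    (hp : Gelem α₀ α₁ p) (hpav : p = permOf α₀ α₁ a v) :
    thetaFun α₀ α₁ α₀' α₁' β σ h p =
      permOf α₀' α₁' (Bfun α₀ α₁ β σ h a v) (conjS σ v) := by
  rw [thetaFun, dif_pos hp]
  have hspec := hp.choose_spec.choose_spec.2.2
  obtain ⟨hab, huv⟩ := permOf_inj α₀ α₁ (hspec.symm.trans hpav)
  rw [huv, hab]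

theorem gelem_thetaFun {p : Equiv.Perm (Cantor × Γ)} (hp : Gelem α₀ α₁ p) :
    Gelem α₀' α₁' (thetaFun α₀ α₁ α₀' α₁' β σ h p) := by
  obtain ⟨a, v, ha, hv, rfl⟩ := id hp
  rw [thetaFun_eq α₀ α₁ α₀' α₁' β σ h hp rfl]
  exact ⟨_, _, isLC_Bfun α₀ α₁ β σ h ha hv, memV_conjS hv, rfl⟩

end Data5

section Data6
variable {Γ Γ' : Type*} [Group Γ] [Group Γ']
variable (α₀ α₁ : Γ ≃* Γ) (α₀' α₁' : Γ' ≃* Γ') (β : Γ ≃* Γ') (σ : Equiv.Perm Bool)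
  (h : Bool → Γ')
variable (hcomp : ∀ (i : Bool) (g : Γ'),
  (if σ i then α₁' else α₀') g = h i * β ((if i then α₁ else α₀) (β.symm g)) * (h i)⁻¹)

include hcomp

theorem thetaFun_mul {p q : Equiv.Perm (Cantor × Γ)}
    (hp : Gelem α₀ α₁ p) (hq : Gelem α₀ α₁ q) :
    thetaFun α₀ α₁ α₀' α₁' β σ h (p * q) =
      thetaFun α₀ α₁ α₀' α₁' β σ h p * thetaFun α₀ α₁ α₀' α₁' β σ h q := by
  obtain ⟨a, u, ha, hu, rfl⟩ := id hp
  obtain ⟨b, v, hb, hv, rfl⟩ := id hq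
  rw [thetaFun_eq α₀ α₁ α₀' α₁' β σ h hp rfl, thetaFun_eq α₀ α₁ α₀' α₁' β σ h hq rfl,
    thetaFun_eq α₀ α₁ α₀' α₁' β σ h (gelem_mul α₀ α₁ hp hq) (permOf_mul α₀ α₁ hu hv),
    permOf_mul α₀' α₁' (memV_conjS hu) (memV_conjS hv), conjS_trans]
  congr 1
  funext y
  set x := v.symm (u.symm ((sHomeo σ).symm y)) with hx
  obtain ⟨m, w, w', hxm, hA1, hA2⟩ := composable_pairs hu hv x
  have hA3 : Adp (v.trans u) m w' := fun z => by
    simp only [Homeomorph.trans_apply, hA1 z, hA2 z]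
  have hvx : v x ∈ cyl w := by
    obtain ⟨y₀, hy₀⟩ := hxm
    exact ⟨y₀, by rw [hy₀, hA1 y₀]⟩
  have huvx : u (v x) = (sHomeo σ).symm y := by rw [hx]; simp
  have husy : u.symm ((sHomeo σ).symm y) = v x := by rw [← huvx]; simp
  have hvtu : (v.trans u).symm ((sHomeo σ).symm y) = x := by rw [hx]; rfl
  have hconj : (conjS σ u).symm y = sHomeo σ (v x) := by
    rw [conjS_symm_apply, husy]
  simp only [Bfun, hconj, hvtu, husy]
  rw [KX_eval α₀ α₁ β h hxm hA3]
  rw [Homeomorph.symm_apply_apply (sHomeo σ) (v x), Homeomorph.symm_apply_apply v x]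
  rw [KX_eval α₀ α₁ β h hvx hA2, KX_eval α₀ α₁ β h hxm hA1]
  rw [tauEquiv_eq α₀' α₁' (mem_cyl_map hvx) (Adp_conjS hA2),
    tauEquiv_eq α₀ α₁ hvx hA2]
  simp only [MulEquiv.trans_apply, map_mul, ← mul_assoc]
  rw [mul_assoc (β (a ((sHomeo σ).symm y))) (Kform α₀ α₁ β h w w'),
    Kident1 α₀ α₁ α₀' α₁' β σ h hcomp w w' (b (v x)), ← mul_assoc,
    mul_assoc _ (Kform α₀ α₁ β h w w'),
    Kident2 α₀ α₁ α₀' α₁' β σ h hcomp m w w']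

end Data6

section Data7
variable {Γ Γ' : Type*} [Group Γ] [Group Γ']
variable (α₀ α₁ : Γ ≃* Γ) (α₀' α₁' : Γ' ≃* Γ') (β : Γ ≃* Γ') (σ : Equiv.Perm Bool)
  (h : Bool → Γ')

/-- inverse data. -/
def hInvFun : Bool → Γ := fun j => β.symm ((h (σ.symm j))⁻¹)

variable (hcomp : ∀ (i : Bool) (g : Γ'),
  (if σ i then α₁' else α₀') g = h i * β ((if i then α₁ else α₀) (β.symm g)) * (h i)⁻¹)

include hcomp

theorem hcomp_inv : ∀ (i : Bool) (g : Γ),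
    (if σ.symm i then α₁ else α₀) g =
      hInvFun β σ h i * β.symm ((if i then α₁' else α₀') (β.symm.symm g)) *
        (hInvFun β σ h i)⁻¹ := by
  intro j g
  obtain ⟨i, rfl⟩ : ∃ i, j = σ i := ⟨σ.symm j, (σ.apply_symm_apply j).symm⟩
  simp only [Equiv.symm_apply_apply, MulEquiv.symm_symm, hInvFun]
  rw [hcomp i (β g)]
  simp only [map_mul, map_inv, MulEquiv.symm_apply_apply, inv_inv]
  group

theorem Hword_inv (m : List Bool) :
    Hword α₀' α₁' β.symm (hInvFun β σ h) (m.map σ) =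
      β.symm ((Hword α₀ α₁ β h m)⁻¹) := by
  induction m using List.reverseRecOn with
  | nil => simp [Hword_nil]
  | append_singleton m b ih =>
    rw [List.map_append, List.map_cons, List.map_nil, Hword_concat, Hword_concat, ih]
    have h1 : hInvFun β σ h (σ b) = β.symm ((h b)⁻¹) := by
      simp [hInvFun]
    rw [h1]
    simp only [MulEquiv.symm_symm, MulEquiv.apply_symm_apply]
    rw [map_inv, hcomp b]
    simp only [map_mul, map_inv, MulEquiv.symm_apply_apply, mul_inv_rev, inv_inv]
    group

theorem Kform_cancel (m w : List Bool) :
    β.symm (Kform α₀ α₁ β h m w) *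
      Kform α₀' α₁' β.symm (hInvFun β σ h) (m.map σ) (w.map σ) = 1 := by
  rw [Kform, Kform, Hword_inv α₀ α₁ α₀' α₁' β σ h hcomp,
    Hword_inv α₀ α₁ α₀' α₁' β σ h hcomp]
  simp only [MulEquiv.symm_symm, map_inv, inv_inv, MulEquiv.apply_symm_apply,
    MulEquiv.symm_apply_apply, map_mul]
  simp only [alphaWord_map_symm α₀ α₁ α₀' α₁' β σ h hcomp]
  simp only [map_mul, map_inv, MulEquiv.symm_apply_apply, MulEquiv.apply_symm_apply,
    mul_inv_rev, inv_inv]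
  group

end Data7

section Data8
variable {Γ Γ' : Type*} [Group Γ] [Group Γ']
variable (α₀ α₁ : Γ ≃* Γ) (α₀' α₁' : Γ' ≃* Γ') (β : Γ ≃* Γ') (σ : Equiv.Perm Bool)
  (h : Bool → Γ')

theorem sHomeo_cancel (X : Cantor) : sHomeo σ.symm (sHomeo σ X) = X := by
  rw [← sHomeo_symm]
  exact Homeomorph.symm_apply_apply _ _

theorem conjS_cancel (v : Cantor ≃ₜ Cantor) : conjS σ.symm (conjS σ v) = v := by
  ext z : 1
  rw [conjS_apply, conjS_apply, sHomeo_symm_symm σ, sHomeo_cancel σ,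
    Homeomorph.symm_apply_apply]

variable (hcomp : ∀ (i : Bool) (g : Γ'),
  (if σ i then α₁' else α₀') g = h i * β ((if i then α₁ else α₀) (β.symm g)) * (h i)⁻¹)

include hcomp

theorem theta_linv {a : Cantor → Γ} {v : Cantor ≃ₜ Cantor} (ha : IsLC a) (hv : memV v) :
    thetaFun α₀' α₁' α₀ α₁ β.symm σ.symm (hInvFun β σ h)
      (thetaFun α₀ α₁ α₀' α₁' β σ h (permOf α₀ α₁ a v)) = permOf α₀ α₁ a v := by
  rw [thetaFun_eq α₀ α₁ α₀' α₁' β σ h ⟨a, v, ha, hv, rfl⟩ rfl]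
  have hGel' : Gelem α₀' α₁'
      (permOf α₀' α₁' (Bfun α₀ α₁ β σ h a v) (conjS σ v)) :=
    ⟨_, _, isLC_Bfun α₀ α₁ β σ h ha hv, memV_conjS hv, rfl⟩
  rw [thetaFun_eq α₀' α₁' α₀ α₁ β.symm σ.symm (hInvFun β σ h) hGel' rfl]
  rw [conjS_cancel]
  congr 1
  funext z
  have hss : ∀ X : Cantor, (sHomeo σ).symm (sHomeo σ X) = X := fun X =>
    Homeomorph.symm_apply_apply _ _
  simp only [Bfun, sHomeo_symm_symm, conjS_symm_apply, hss]
  obtain ⟨m, w, hxm, hA⟩ := memV_exists_adp hv (v.symm z)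
  rw [KX_eval α₀ α₁ β h hxm hA,
    KX_eval α₀' α₁' β.symm (hInvFun β σ h) (mem_cyl_map hxm) (Adp_conjS hA)]
  rw [map_mul, MulEquiv.symm_apply_apply, mul_assoc,
    Kform_cancel α₀ α₁ α₀' α₁' β σ h hcomp, mul_one]

end Data8


/-- If `β : Γ ≃ Γ̃` is an isomorphism, `σ` a permutation of `{0,1}`
and `h₀, h₁ ∈ Γ̃` satisfy `α̃_{σ(i)} = ad(h_i) ∘ β α_i β⁻¹` for `i = 0,1`, then the
twisted fraction groups `LΓ ⋊ V` and `LΓ̃ ⋊ V` are isomorphic. -/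
theorem obvious_isomorphism (Γ Γ' : Type) [Group Γ] [Group Γ']
    (α₀ α₁ : Γ ≃* Γ) (α₀' α₁' : Γ' ≃* Γ')
    (β : Γ ≃* Γ') (σ : Equiv.Perm Bool) (h₀ h₁ : Γ')
    (hcomp : ∀ (i : Bool) (g : Γ'),
      (if σ i then α₁' else α₀') g =
        (if i then h₁ else h₀) * β ((if i then α₁ else α₀) (β.symm g)) *
          (if i then h₁ else h₀)⁻¹) :
    Nonempty (↥(Gsub Γ α₀ α₁) ≃* ↥(Gsub Γ' α₀' α₁')) := by
  set h : Bool → Γ' := fun i => if i then h₁ else h₀ with hh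
  have hcomp' : ∀ (i : Bool) (g : Γ'),
      (if σ i then α₁' else α₀') g =
        h i * β ((if i then α₁ else α₀) (β.symm g)) * (h i)⁻¹ := hcomp
  have hcompInv := hcomp_inv α₀ α₁ α₀' α₁' β σ h hcomp'
  have e3 : hInvFun β.symm σ.symm (hInvFun β σ h) = h := by
    funext j
    simp [hInvFun]
  refine ⟨MulEquiv.mk' ⟨fun p => ⟨thetaFun α₀ α₁ α₀' α₁' β σ h p.1, ?_⟩,
    fun q => ⟨thetaFun α₀' α₁' α₀ α₁ β.symm σ.symm (hInvFun β σ h) q.1, ?_⟩, ?_, ?_⟩ ?_⟩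
  · exact (mem_Gsub_iff α₀' α₁').mpr
      (gelem_thetaFun α₀ α₁ α₀' α₁' β σ h ((mem_Gsub_iff α₀ α₁).mp p.2))
  · exact (mem_Gsub_iff α₀ α₁).mpr
      (gelem_thetaFun α₀' α₁' α₀ α₁ β.symm σ.symm (hInvFun β σ h)
        ((mem_Gsub_iff α₀' α₁').mp q.2))
  · rintro ⟨p, hp⟩
    apply Subtype.ext
    obtain ⟨a, v, ha, hv, hpe⟩ := (mem_Gsub_iff α₀ α₁).mp hp
    simp only [hpe]
    exact theta_linv α₀ α₁ α₀' α₁' β σ h hcomp' ha hv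
  · rintro ⟨q, hq⟩
    apply Subtype.ext
    obtain ⟨b, v', hb, hv', hqe⟩ := (mem_Gsub_iff α₀' α₁').mp hq
    simp only [hqe]
    have := theta_linv α₀' α₁' α₀ α₁ β.symm σ.symm (hInvFun β σ h) hcompInv hb hv'
    rwa [e3, MulEquiv.symm_symm, Equiv.symm_symm] at this
  · rintro ⟨p, hp⟩ ⟨q, hq⟩
    apply Subtype.ext
    exact thetaFun_mul α₀ α₁ α₀' α₁' β σ h hcomp'
      ((mem_Gsub_iff α₀ α₁).mp hp) ((mem_Gsub_iff α₀ α₁).mp hq)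
end

section
/- Let F ⊂ Q₂ be a finite set and I ⊆ 𝔠 a nonempty finite union of standard dyadic intervals. If every v ∈ V with v(x) = x and v'(x) = 1 for all x ∈ F stabilizes I (v(I) = I), then I = 𝔠. -/
/-! Suppose `I ≠ 𝔠`, pick `p ∈ I` and `x₀ ∉ I`, and let `K` exceed the lengths of the words
of `P` and the supports of the points of `F`. Setting the `K`-th bit of `p` and of `x₀` to `1`
and reading off the first `K + 1` bits gives words `a`, `b` with `cyl a ⊆ I`, `cyl b ⊆ 𝔠 \ I`,
and no point of `F` in `cyl a ∪ cyl b`. The element of `V` exchanging `cyl a` and `cyl b` is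
the identity near `F`, yet it moves points of `I` out of `I`. -/

open Function

lemma cat_apply_of_lt (w : List Bool) (x : Cantor) {n : ℕ} (h : n < w.length) :
    cat w x n = w.getD n false := if_pos h

lemma cat_apply_of_le (w : List Bool) (x : Cantor) {n : ℕ} (h : w.length ≤ n) :
    cat w x n = x (n - w.length) := if_neg (by omega)

lemma continuous_cat (w : List Bool) : Continuous (cat w) := by
  refine continuous_pi fun n => ?_
  by_cases h : n < w.length
  · simp only [cat_apply_of_lt _ _ h]
    exact continuous_const
  · simp only [cat_apply_of_le _ _ (not_lt.1 h)]
    exact continuous_apply _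

def dropSeq (n : ℕ) (x : Cantor) : Cantor := fun i => x (i + n)

lemma continuous_dropSeq (n : ℕ) : Continuous (dropSeq n) :=
  continuous_pi fun i => continuous_apply (i + n)

@[simp]
lemma dropSeq_cat (w : List Bool) (z : Cantor) : dropSeq w.length (cat w z) = z := by
  funext i
  simp [dropSeq, cat_apply_of_le]

lemma cat_mem_cyl (w : List Bool) (z : Cantor) : cat w z ∈ cyl w := ⟨z, rfl⟩

lemma cat_dropSeq_of_mem_cyl {w : List Bool} {x : Cantor} (hx : x ∈ cyl w) :
    cat w (dropSeq w.length x) = x := by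
  obtain ⟨z, rfl⟩ := hx
  rw [dropSeq_cat]

lemma mem_cyl_iff {w : List Bool} {x : Cantor} :
    x ∈ cyl w ↔ ∀ i < w.length, x i = w.getD i false := by
  refine ⟨?_, fun h => ⟨dropSeq w.length x, funext fun n => ?_⟩⟩
  · rintro ⟨z, rfl⟩ i hi
    exact cat_apply_of_lt w z hi
  · by_cases hn : n < w.length
    · rw [cat_apply_of_lt _ _ hn, h n hn]
    · rw [cat_apply_of_le _ _ (by omega), dropSeq]
      congr 1
      omega

lemma mem_cyl_congr {w : List Bool} {x y : Cantor} (h : ∀ i < w.length, x i = y i) :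
    x ∈ cyl w ↔ y ∈ cyl w := by
  simp only [mem_cyl_iff]
  exact forall₂_congr fun i hi => by rw [h i hi]

lemma isClopen_cyl (w : List Bool) : IsClopen (cyl w) := by
  have hcyl : cyl w = (fun (x : Cantor) (i : Fin w.length) => x i) ⁻¹'
      {fun i : Fin w.length => w.getD i false} := by
    ext x
    simp only [mem_cyl_iff, Set.mem_preimage, Set.mem_singleton_iff, funext_iff, Fin.forall_iff]
  rw [hcyl]
  exact (isClopen_discrete _).preimage (continuous_pi fun i => continuous_apply _)

lemma mem_biUnion_cyl_congr {P : Finset (List Bool)} {L : ℕ} (hP : ∀ w ∈ P, w.length ≤ L)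
    {x y : Cantor} (h : ∀ i < L, x i = y i) :
    x ∈ ⋃ w ∈ P, cyl w ↔ y ∈ ⋃ w ∈ P, cyl w := by
  simp only [Set.mem_iUnion₂]
  exact exists₂_congr fun w hw => mem_cyl_congr fun i hi => h i (hi.trans_le (hP w hw))

def prefixWord (x : Cantor) (L : ℕ) : List Bool := List.ofFn fun i : Fin L => x i

@[simp]
lemma length_prefixWord (x : Cantor) (L : ℕ) : (prefixWord x L).length = L := by
  simp [prefixWord]

lemma getD_prefixWord (x : Cantor) {L i : ℕ} (hi : i < L) :
    (prefixWord x L).getD i false = x i := by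
  simp [prefixWord, hi]

lemma mem_cyl_prefixWord_iff {x y : Cantor} {L : ℕ} :
    y ∈ cyl (prefixWord x L) ↔ ∀ i < L, y i = x i := by
  rw [mem_cyl_iff, length_prefixWord]
  exact forall₂_congr fun i hi => by rw [getD_prefixWord x hi]

lemma mem_cyl_prefixWord (x : Cantor) (L : ℕ) : x ∈ cyl (prefixWord x L) :=
  mem_cyl_prefixWord_iff.2 fun _ _ => rfl

lemma mem_cyl_prefixWord_update {x y : Cantor} {K : ℕ}
    (hy : y ∈ cyl (prefixWord (update x K true) (K + 1))) :
    (∀ i < K, y i = x i) ∧ y K = true := by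
  rw [mem_cyl_prefixWord_iff] at hy
  refine ⟨fun i hi => ?_, by simpa using hy K K.lt_succ_self⟩
  rw [hy i (by omega), update_of_ne hi.ne]

lemma exists_bound_of_forall_inQ2 {F : Finset Cantor} (hF : ∀ x ∈ F, InQ2 x) :
    ∃ N, ∀ x ∈ F, ∀ m, N ≤ m → x m = false := by
  choose! n hn using hF
  exact ⟨F.sup n, fun x hx m hm => hn x hx m ((Finset.le_sup hx).trans hm)⟩

section CylSwap

variable {a b : List Bool}

open Classical in
noncomputable def cylSwap (a b : List Bool) (x : Cantor) : Cantor :=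
  if x ∈ cyl a then cat b (dropSeq a.length x)
  else if x ∈ cyl b then cat a (dropSeq b.length x) else x

lemma cylSwap_cat_left (z : Cantor) : cylSwap a b (cat a z) = cat b z := by
  simp [cylSwap, cat_mem_cyl]

lemma cylSwap_cat_right (hab : Disjoint (cyl a) (cyl b)) (z : Cantor) :
    cylSwap a b (cat b z) = cat a z := by
  simp [cylSwap, cat_mem_cyl, hab.notMem_of_mem_right (cat_mem_cyl b z)]

lemma cylSwap_of_notMem {x : Cantor} (ha : x ∉ cyl a) (hb : x ∉ cyl b) : cylSwap a b x = x := by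
  simp [cylSwap, ha, hb]

lemma cylSwap_mem_cyl_right {x : Cantor} (hx : x ∈ cyl a) : cylSwap a b x ∈ cyl b := by
  rw [← cat_dropSeq_of_mem_cyl hx, cylSwap_cat_left]
  exact cat_mem_cyl b _

lemma cylSwap_involutive (hab : Disjoint (cyl a) (cyl b)) : Involutive (cylSwap a b) := by
  intro x
  by_cases ha : x ∈ cyl a
  · rw [← cat_dropSeq_of_mem_cyl ha, cylSwap_cat_left, cylSwap_cat_right hab]
  by_cases hb : x ∈ cyl b
  · rw [← cat_dropSeq_of_mem_cyl hb, cylSwap_cat_right hab, cylSwap_cat_left]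
  rw [cylSwap_of_notMem ha hb, cylSwap_of_notMem ha hb]

lemma continuous_cylSwap : Continuous (cylSwap a b) := by
  classical
  refine Continuous.if (by simp [(isClopen_cyl a).frontier_eq])
    ((continuous_cat b).comp (continuous_dropSeq _)) ?_
  exact Continuous.if (by simp [(isClopen_cyl b).frontier_eq])
    ((continuous_cat a).comp (continuous_dropSeq _)) continuous_id

noncomputable def cylSwapHomeo (hab : Disjoint (cyl a) (cyl b)) : Cantor ≃ₜ Cantor where
  toEquiv := (cylSwap_involutive hab).toPerm
  continuous_toFun := continuous_cylSwap
  continuous_invFun := continuous_cylSwap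

@[simp]
lemma coe_cylSwapHomeo (hab : Disjoint (cyl a) (cyl b)) : ⇑(cylSwapHomeo hab) = cylSwap a b :=
  rfl

lemma exists_cyl_forall_cylSwap_cat_eq {x : Cantor} (ha : x ∉ cyl a) (hb : x ∉ cyl b) :
    ∃ (m : List Bool) (y : Cantor), x = cat m y ∧ ∀ z, cylSwap a b (cat m z) = cat m z := by
  set L := max a.length b.length
  obtain ⟨y, hy⟩ := mem_cyl_prefixWord x L
  refine ⟨prefixWord x L, y, hy, fun z => cylSwap_of_notMem ?_ ?_⟩
  all_goals
    have hz : ∀ i < L, cat (prefixWord x L) z i = x i :=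
      mem_cyl_prefixWord_iff.1 (cat_mem_cyl _ z)
  · exact (mem_cyl_congr fun i hi => hz i (lt_max_of_lt_left hi)).not.2 ha
  · exact (mem_cyl_congr fun i hi => hz i (lt_max_of_lt_right hi)).not.2 hb

lemma memV_cylSwapHomeo (hab : Disjoint (cyl a) (cyl b)) : memV (cylSwapHomeo hab) := by
  intro x
  by_cases ha : x ∈ cyl a
  · exact ⟨a, b, _, (cat_dropSeq_of_mem_cyl ha).symm, cylSwap_cat_left⟩
  by_cases hb : x ∈ cyl b
  · exact ⟨b, a, _, (cat_dropSeq_of_mem_cyl hb).symm, cylSwap_cat_right hab⟩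
  obtain ⟨m, y, hxy, hm⟩ := exists_cyl_forall_cylSwap_cat_eq ha hb
  exact ⟨m, m, y, hxy, hm⟩

lemma cylSwapHomeo_apply_eq_self_and_hasLogSlope_zero (hab : Disjoint (cyl a) (cyl b)) {x : Cantor}
    (ha : x ∉ cyl a) (hb : x ∉ cyl b) :
    cylSwapHomeo hab x = x ∧ HasLogSlope (cylSwapHomeo hab) x 0 := by
  obtain ⟨m, y, hxy, hm⟩ := exists_cyl_forall_cylSwap_cat_eq ha hb
  exact ⟨cylSwap_of_notMem ha hb, m, m, y, hxy, hm, by ring⟩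

end CylSwap

/-- If `F ⊂ Q₂` is finite, `I` a nonempty finite union of standard
dyadic intervals, and every `v ∈ V` fixing each point of `F` with slope `1` there
stabilizes `I`, then `I = 𝔠`. -/
theorem stabilized_union_is_everything (F : Finset Cantor) (hF : ∀ x ∈ F, InQ2 x)
    (P : Finset (List Bool)) (hne : (⋃ w ∈ P, cyl w).Nonempty)
    (hstab : ∀ v : Cantor ≃ₜ Cantor, memV v →
      (∀ x ∈ F, v x = x ∧ HasLogSlope v x 0) →
      (⇑v) '' (⋃ w ∈ P, cyl w) = ⋃ w ∈ P, cyl w) :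
    (⋃ w ∈ P, cyl w) = Set.univ := by
  set I := ⋃ w ∈ P, cyl w
  by_contra hI
  obtain ⟨x₀, hx₀⟩ := (Set.ne_univ_iff_exists_notMem I).1 hI
  obtain ⟨p, hp⟩ := hne
  obtain ⟨N, hN⟩ := exists_bound_of_forall_inQ2 hF
  set K := max N (P.sup List.length)
  have hP : ∀ w ∈ P, w.length ≤ K := fun w hw => (Finset.le_sup hw).trans (le_max_right _ _)
  set a := prefixWord (update p K true) (K + 1)
  set b := prefixWord (update x₀ K true) (K + 1)
  have hA : cyl a ⊆ I := fun y hy =>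
    (mem_biUnion_cyl_congr hP (mem_cyl_prefixWord_update hy).1).2 hp
  have hB : cyl b ⊆ Iᶜ := fun y hy =>
    (mem_biUnion_cyl_congr hP (mem_cyl_prefixWord_update hy).1).not.2 hx₀
  have hab : Disjoint (cyl a) (cyl b) := Disjoint.mono hA hB disjoint_compl_right
  have hF_avoid : ∀ x ∈ F, ∀ y, x ∉ cyl (prefixWord (update y K true) (K + 1)) :=
    fun x hx y h => by simpa [hN x hx K (le_max_left _ _)] using (mem_cyl_prefixWord_update h).2
  have hv := hstab (cylSwapHomeo hab) (memV_cylSwapHomeo hab) fun x hx =>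
    cylSwapHomeo_apply_eq_self_and_hasLogSlope_zero hab (hF_avoid x hx p) (hF_avoid x hx x₀)
  have hpa : update p K true ∈ cyl a := mem_cyl_prefixWord _ _
  refine hB (cylSwap_mem_cyl_right hpa) ?_
  rw [← coe_cylSwapHomeo hab, ← hv]
  exact Set.mem_image_of_mem _ (hA hpa)
end
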